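/- arXiv:1409.3639 — 4 statements merged into one kernel-verified Lean document; each statement's English description precedes it below -/
import Mathlib

section
/- Let q be a power of 2 and n ≥ 1 an odd integer. Then ν₂(ord_n(q)) = max over prime divisors p of n of ν₂(ord_p(q)), where ord_m(q) denotes the multiplicative order of q modulo m and ν₂ is the 2-adic valuation. -/
/-!
By the Chinese remainder theorem, `ord_{ab}(q) = lcm (ord_a(q), ord_b(q))` for coprime `a, b`, and
the `ℓ`-adic valuation of an lcm is the maximum of the valuations, so everything reduces to prime
powers `p ^ k` with `p ≠ ℓ`. There `ord_p(q) ∣ ord_{p^k}(q) ∣ ord_p(q) * p ^ (k - 1)`, the second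
divisibility because raising `q ^ ord_p(q) ≡ 1 [MOD p]` to the power `p ^ (k - 1)` gives a
congruence modulo `p ^ k`; as `p ≠ ℓ`, both bounds have the same `ℓ`-adic valuation.
-/

theorem padicValNat_le_of_dvd {p a b : ℕ} [Fact p.Prime] (hb : b ≠ 0) (h : a ∣ b) :
    padicValNat p a ≤ padicValNat p b :=
  (padicValNat_dvd_iff_le hb).mp (pow_padicValNat_dvd.trans h)

theorem padicValNat_lcm {p a b : ℕ} [Fact p.Prime] (ha : a ≠ 0) (hb : b ≠ 0) :
    padicValNat p (a.lcm b) = max (padicValNat p a) (padicValNat p b) := by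
  simp only [← Nat.factorization_def _ Fact.out, Nat.factorization_lcm ha hb]
  rfl

namespace ZMod

theorem orderOf_natCast_ne_zero {q n : ℕ} [NeZero n] (h : q.Coprime n) :
    orderOf (q : ZMod n) ≠ 0 :=
  ((isUnit_iff_coprime q n).mpr h).isOfFinOrder.orderOf_pos.ne'

theorem orderOf_natCast_dvd_of_dvd (q : ℕ) {m n : ℕ} (h : m ∣ n) :
    orderOf (q : ZMod m) ∣ orderOf (q : ZMod n) := by
  simpa using orderOf_map_dvd (castHom h (ZMod m)).toMonoidHom (q : ZMod n)

theorem orderOf_natCast_mul (q : ℕ) {m n : ℕ} (h : m.Coprime n) :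
    orderOf (q : ZMod (m * n)) = (orderOf (q : ZMod m)).lcm (orderOf (q : ZMod n)) := by
  rw [← (chineseRemainder h).toMulEquiv.orderOf_eq, ← Prod.orderOf_mk]
  exact congrArg orderOf (map_natCast (chineseRemainder h) q)

theorem orderOf_natCast_prime_pow_succ_dvd (q p k : ℕ) :
    orderOf (q : ZMod (p ^ (k + 1))) ∣ orderOf (q : ZMod p) * p ^ k := by
  apply orderOf_dvd_of_pow_eq_one
  have hp : (p : ℤ) ∣ (q : ℤ) ^ orderOf (q : ZMod p) - 1 := by
    rw [← intCast_zmod_eq_zero_iff_dvd]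
    simp
  have hpk := dvd_sub_pow_of_dvd_sub hp k
  rw [one_pow, ← pow_mul, ← Nat.cast_pow, ← intCast_zmod_eq_zero_iff_dvd] at hpk
  push_cast at hpk
  exact sub_eq_zero.mp hpk

theorem padicValNat_orderOf_natCast_prime_pow {ℓ p q k : ℕ} [Fact ℓ.Prime] (hp : p.Prime)
    (hℓp : ℓ ≠ p) (hq : q.Coprime p) (hk : k ≠ 0) :
    padicValNat ℓ (orderOf (q : ZMod (p ^ k))) = padicValNat ℓ (orderOf (q : ZMod p)) := by
  obtain ⟨j, rfl⟩ := Nat.exists_eq_add_one_of_ne_zero hk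
  have : NeZero p := ⟨hp.ne_zero⟩
  have hr := orderOf_natCast_ne_zero hq
  have hpj : p ^ j ≠ 0 := pow_ne_zero _ hp.ne_zero
  have hℓ : padicValNat ℓ (p ^ j) = 0 :=
    padicValNat.eq_zero_of_not_dvd fun h =>
      hℓp ((Nat.prime_dvd_prime_iff_eq Fact.out hp).mp (Nat.Prime.dvd_of_dvd_pow Fact.out h))
  refine le_antisymm ?_ ?_
  · calc padicValNat ℓ (orderOf (q : ZMod (p ^ (j + 1))))
        ≤ padicValNat ℓ (orderOf (q : ZMod p) * p ^ j) :=
          padicValNat_le_of_dvd (mul_ne_zero hr hpj) (orderOf_natCast_prime_pow_succ_dvd q p j)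
      _ = padicValNat ℓ (orderOf (q : ZMod p)) := by rw [padicValNat.mul hr hpj, hℓ, add_zero]
  · exact padicValNat_le_of_dvd (orderOf_natCast_ne_zero (Nat.Coprime.pow_right _ hq))
      (orderOf_natCast_dvd_of_dvd q (dvd_pow_self p hk))

theorem padicValNat_orderOf_natCast_eq_sup {ℓ q n : ℕ} [Fact ℓ.Prime] (hℓ : ¬ℓ ∣ n)
    (hq : q.Coprime n) :
    padicValNat ℓ (orderOf (q : ZMod n)) =
      n.primeFactors.sup fun p => padicValNat ℓ (orderOf (q : ZMod p)) := by
  induction n using Nat.recOnPosPrimePosCoprime with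
  | zero => simp at hℓ
  | one => simp [Subsingleton.orderOf_eq]
  | prime_pow p k hp hk =>
    rw [Nat.primeFactors_prime_pow hk.ne' hp, Finset.sup_singleton]
    refine padicValNat_orderOf_natCast_prime_pow hp ?_
      (hq.coprime_dvd_right (dvd_pow_self p hk.ne')) hk.ne'
    rintro rfl
    exact hℓ (dvd_pow_self ℓ hk.ne')
  | coprime a b ha hb hab iha ihb =>
    have : NeZero a := ⟨by omega⟩
    have : NeZero b := ⟨by omega⟩
    have hqa : q.Coprime a := Nat.Coprime.coprime_mul_right_right hq
    have hqb : q.Coprime b := Nat.Coprime.coprime_mul_left_right hq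
    rw [orderOf_natCast_mul q hab,
      padicValNat_lcm (orderOf_natCast_ne_zero hqa) (orderOf_natCast_ne_zero hqb),
      iha (fun h => hℓ (h.mul_right b)) hqa, ihb (fun h => hℓ (h.mul_left a)) hqb,
      hab.primeFactors_mul, Finset.sup_union]

end ZMod

theorem stmt_0_general (q n e : ℕ) (hq : q = 2 ^ e) (hn : Odd n) :
    padicValNat 2 (orderOf (q : ZMod n)) =
      n.primeFactors.sup (fun p => padicValNat 2 (orderOf (q : ZMod p))) := by
  subst hq
  exact ZMod.padicValNat_orderOf_natCast_eq_sup hn.not_two_dvd_nat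
    ((Nat.coprime_two_left.mpr hn).pow_left e)

/-- Let `q` be a power of `2` and `n ≥ 1` an odd integer.  Then the `2`-adic valuation of the
multiplicative order of `q` modulo `n` is the maximum, over the prime divisors `p` of `n`, of
the `2`-adic valuation of the multiplicative order of `q` modulo `p`. -/
theorem stmt_0 (q n e : ℕ) (hq : q = 2 ^ e) (hn : Odd n) (hn1 : 1 ≤ n) :
    padicValNat 2 (orderOf (q : ZMod n)) =
      n.primeFactors.sup (fun p => padicValNat 2 (orderOf (q : ZMod p))) :=
  stmt_0_general q n e hq hn
end

section
/- Let q be a power of 2, let m ≥ 3 be an odd integer all of whose prime divisors p satisfy ν₂(ord_p(q)) = i for a fixed i ≥ 1, and let n ≥ 1 be odd with ν₂(ord_n(q)) < i. Then the congruence q^x ≡ -1 (mod m) together with q^x ≡ 1 (mod n) has a common positive integer solution x. -/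
/-!
Take `x = 2 ^ (i - 1) * s` with `s = m * ordCompl[2] (φ (m * n))`, which is odd. Every order
involved divides `φ (m * n)`, so `ord_n q ∣ x` because `ν₂ (ord_n q) ≤ i - 1`, while for each prime
`p ∣ m` the order `ord_p q` divides `2 ^ i * ordCompl[2] (φ (m * n))` but not `x`. Hence `y = q ^ x`
satisfies `y ≢ 1 (mod p)` for every `p ∣ m`, so `y - 1` is coprime to `m`; and `y ^ 2 = a ^ m`
with `a ≡ 1` modulo every prime factor of `m`, which forces `y ^ 2 ≡ 1 (mod m)` (if `p ∣ b - 1`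
then `p * (b - 1) ∣ b ^ p - 1`). So `m ∣ (y - 1) * (y + 1)` gives `y ≡ -1 (mod m)`.
-/

open Nat

theorem mul_sub_one_dvd_pow_sub_one {R : Type*} [CommRing R] {p : ℕ} {b : R}
    (h : (p : R) ∣ b - 1) : (p : R) * (b - 1) ∣ b ^ p - 1 := by
  have hsum : (p : R) ∣ ∑ k ∈ Finset.range p, b ^ k := by
    simpa using dvd_geom_sum₂_self h
  rw [← geom_sum_mul]
  exact mul_dvd_mul hsum dvd_rfl

theorem dvd_pow_self_sub_one_of_forall_prime_dvd {R : Type*} [CommRing R] {a : R} (m : ℕ)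
    (h : ∀ p, p.Prime → p ∣ m → (p : R) ∣ a - 1) : (m : R) ∣ a ^ m - 1 := by
  induction m using Nat.strong_induction_on with
  | _ m ih =>
    rcases eq_or_ne m 0 with rfl | hm0
    · simp
    rcases eq_or_ne m 1 with rfl | hm1
    · simp
    obtain ⟨p, hp, m', rfl⟩ := Nat.exists_prime_and_dvd hm1
    have hm' : (m' : R) ∣ a ^ m' - 1 :=
      ih m' (lt_mul_left (Nat.pos_of_ne_zero (right_ne_zero_of_mul hm0)) hp.one_lt)
        fun r hr hrm => h r hr (hrm.mul_left p)
    have hp' : (p : R) ∣ a ^ m' - 1 :=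
      (h p hp (dvd_mul_right p m')).trans (sub_one_dvd_pow_sub_one a m')
    rw [mul_comm p, pow_mul, Nat.cast_mul, mul_comm]
    exact (mul_dvd_mul_left _ hm').trans (mul_sub_one_dvd_pow_sub_one hp')

theorem Int.dvd_add_one_of_dvd_sq_sub_one {m : ℕ} {y : ℤ} (hsq : (m : ℤ) ∣ y ^ 2 - 1)
    (hne : ∀ p, p.Prime → p ∣ m → ¬(p : ℤ) ∣ y - 1) : (m : ℤ) ∣ y + 1 := by
  have hcop : IsCoprime (m : ℤ) (y - 1) := by
    rw [Int.isCoprime_iff_gcd_eq_one]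
    exact Nat.coprime_of_dvd fun p hp hpm => Int.natCast_dvd.not.mp (hne p hp hpm)
  exact hcop.dvd_of_dvd_mul_left (by rwa [show (y - 1) * (y + 1) = y ^ 2 - 1 by ring])

theorem ZMod.intCast_eq_one_iff_dvd {N : ℕ} (y : ℤ) : (y : ZMod N) = 1 ↔ (N : ℤ) ∣ y - 1 := by
  simpa [eq_comm] using ZMod.intCast_eq_intCast_iff_dvd_sub 1 y N

theorem ZMod.intCast_eq_neg_one_iff_dvd {N : ℕ} (y : ℤ) : (y : ZMod N) = -1 ↔ (N : ℤ) ∣ y + 1 := by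
  simpa [eq_comm] using ZMod.intCast_eq_intCast_iff_dvd_sub (-1) y N

theorem ZMod.intCast_pow_self_eq_one {m : ℕ} {a : ℤ}
    (h : ∀ p, p.Prime → p ∣ m → (a : ZMod p) = 1) : (a : ZMod m) ^ m = 1 := by
  rw [← Int.cast_pow, ZMod.intCast_eq_one_iff_dvd]
  exact dvd_pow_self_sub_one_of_forall_prime_dvd m fun p hp hpm =>
    (ZMod.intCast_eq_one_iff_dvd a).mp (h p hp hpm)

theorem ZMod.intCast_eq_neg_one_of_sq_eq_one {m : ℕ} {y : ℤ} (hsq : (y : ZMod m) ^ 2 = 1)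
    (hne : ∀ p, p.Prime → p ∣ m → (y : ZMod p) ≠ 1) : (y : ZMod m) = -1 := by
  rw [← Int.cast_pow, ZMod.intCast_eq_one_iff_dvd] at hsq
  exact (ZMod.intCast_eq_neg_one_iff_dvd y).mpr <| Int.dvd_add_one_of_dvd_sq_sub_one hsq
    fun p hp hpm => (ZMod.intCast_eq_one_iff_dvd y).not.mp (hne p hp hpm)

theorem ZMod.orderOf_natCast_dvd_totient {q N : ℕ} (h : q.Coprime N) :
    orderOf (q : ZMod N) ∣ φ N :=
  orderOf_dvd_of_pow_eq_one <| by
    simpa using (ZMod.natCast_eq_natCast_iff _ _ _).mpr (Nat.ModEq.pow_totient h)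

theorem dvd_pow_mul_ordCompl {p a T j : ℕ} (hp : p.Prime) (haT : a ∣ T)
    (ha : padicValNat p a ≤ j) : a ∣ p ^ j * ordCompl[p] T := by
  rw [← Nat.factorization_def a hp] at ha
  rw [← Nat.ordProj_mul_ordCompl_eq_self a p]
  exact mul_dvd_mul (Nat.pow_dvd_pow p ha) (Nat.ordCompl_dvd_ordCompl_of_dvd haT p)

theorem pow_pow_mul_ne_one_of_padicValNat_orderOf {G : Type*} [Monoid G] {g : G} {p j s : ℕ}
    (hp : p.Prime) (hg : padicValNat p (orderOf g) = j + 1) (hs : ¬p ∣ s) :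
    g ^ (p ^ j * s) ≠ 1 := by
  intro h
  have hdvd : p ^ j * p ∣ p ^ j * s := by
    rw [← pow_succ, ← hg]
    exact pow_padicValNat_dvd.trans (orderOf_dvd_of_pow_eq_one h)
  exact hs (Nat.dvd_of_mul_dvd_mul_left (pow_pos hp.pos j) hdvd)

theorem stmt_4_general (q e m n i : ℕ) (hq : q = 2 ^ e)
    (hm : Odd m)
    (hmp : ∀ p : ℕ, p.Prime → p ∣ m → padicValNat 2 (orderOf (q : ZMod p)) = i)
    (hn : Odd n)
    (hni : padicValNat 2 (orderOf (q : ZMod n)) < i) :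
    ∃ x : ℕ, 0 < x ∧ (q : ZMod m) ^ x = -1 ∧ (q : ZMod n) ^ x = 1 := by
  obtain ⟨j, rfl⟩ : ∃ j, i = j + 1 := ⟨i - 1, by omega⟩
  have hcop {N : ℕ} (hN : Odd N) : q.Coprime N := hq ▸ hN.coprime_two_left.pow_left e
  set T := φ (m * n)
  have hT : T ≠ 0 := (Nat.totient_pos.mpr (hm.mul hn).pos).ne'
  set s := m * ordCompl[2] T
  have hs : Odd s :=
    hm.mul (Nat.odd_iff.mpr (Nat.two_dvd_ne_zero.mp (Nat.not_dvd_ordCompl prime_two hT)))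
  have hord {N : ℕ} (hN : Odd N) (hNT : N ∣ m * n) : orderOf (q : ZMod N) ∣ T :=
    (ZMod.orderOf_natCast_dvd_totient (hcop hN)).trans (Nat.totient_dvd_of_dvd hNT)
  refine ⟨2 ^ j * s, Nat.mul_pos (by positivity) hs.pos, ?_, ?_⟩
  · have hsq : ((q : ℤ) ^ (2 ^ j * s)) ^ 2 = ((q : ℤ) ^ (2 ^ (j + 1) * ordCompl[2] T)) ^ m := by
      ring
    have h := ZMod.intCast_eq_neg_one_of_sq_eq_one (m := m) (y := (q : ℤ) ^ (2 ^ j * s)) ?_ ?_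
    · simpa using h
    · rw [← Int.cast_pow, hsq, Int.cast_pow]
      refine ZMod.intCast_pow_self_eq_one fun p hp hpm => ?_
      push_cast
      exact orderOf_dvd_iff_pow_eq_one.mp <| dvd_pow_mul_ordCompl prime_two
        (hord (hm.of_dvd_nat hpm) (hpm.trans (dvd_mul_right m n))) (hmp p hp hpm).le
    · intro p hp hpm
      push_cast
      exact pow_pow_mul_ne_one_of_padicValNat_orderOf prime_two (hmp p hp hpm) hs.not_two_dvd_nat
  · exact orderOf_dvd_iff_pow_eq_one.mp <|
      (dvd_pow_mul_ordCompl prime_two (hord hn (dvd_mul_left n m)) (by omega)).trans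
        (mul_dvd_mul_left _ (dvd_mul_left _ _))

/-- Let `q` be a power of `2`, let `m ≥ 3` be odd with every prime divisor `p` of `m` satisfying
`ν₂(ord_p(q)) = i` for a fixed `i ≥ 1`, and let `n ≥ 1` be odd with `ν₂(ord_n(q)) < i`.  Then the
congruences `q ^ x ≡ -1 (mod m)` and `q ^ x ≡ 1 (mod n)` have a common positive solution `x`. -/
theorem stmt_4 (q e m n i : ℕ) (hq : q = 2 ^ e)
    (hm : Odd m) (hm3 : 3 ≤ m) (hi : 1 ≤ i)
    (hmp : ∀ p : ℕ, p.Prime → p ∣ m → padicValNat 2 (orderOf (q : ZMod p)) = i)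
    (hn : Odd n) (hn1 : 1 ≤ n)
    (hni : padicValNat 2 (orderOf (q : ZMod n)) < i) :
    ∃ x : ℕ, 0 < x ∧ (q : ZMod m) ^ x = -1 ∧ (q : ZMod n) ^ x = 1 :=
  stmt_4_general q e m n i hq hm hmp hn hni
end

section
/- Let q be a power of 2 and m ≥ 3 an odd integer. If there exists a positive integer x with q^x ≡ -1 (mod m), and ν₂(x) = i-1, then every prime divisor p of m satisfies ν₂(ord_p(q)) = i. -/
/-!
If `q ^ x = -1` modulo a prime `p ∣ m`, then `p` is odd since `m` is, so `-1 ≠ 1` in `ZMod p`.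
Hence `ord_p(q)` divides `2x` but not `x`, and such a divisor of `2x` carries exactly one more
factor `2` than `x`.
-/

/-- Off every prime other than `p`, `d` is bounded by `x`; so the prime at which `d ∤ x` fails
can only be `p`, where `d` is bounded by `p * x`. -/
theorem padicValNat_eq_succ_of_dvd_mul_of_not_dvd {p d x : ℕ} (hp : p.Prime) (hx : x ≠ 0)
    (hdpx : d ∣ p * x) (hdx : ¬ d ∣ x) : padicValNat p d = padicValNat p x + 1 := by
  have hd : d ≠ 0 := ne_zero_of_dvd_ne_zero (mul_ne_zero hp.ne_zero hx) hdpx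
  have hle := (Nat.factorization_le_iff_dvd hd (mul_ne_zero hp.ne_zero hx)).2 hdpx
  rw [Nat.factorization_mul hp.ne_zero hx, hp.factorization] at hle
  obtain ⟨r, hr⟩ : ∃ r, x.factorization r < d.factorization r := by
    by_contra! h
    exact hdx ((Nat.factorization_le_iff_dvd hd hx).1 h)
  have hrp : r = p := by
    by_contra hrp
    have := hle r
    simp only [Finsupp.add_apply, Finsupp.single_apply, if_neg (Ne.symm hrp)] at this
    omega
  subst hrp
  have := hle r
  simp only [Finsupp.add_apply, Finsupp.single_eq_same] at this
  rw [← Nat.factorization_def d hp, ← Nat.factorization_def x hp]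
  omega

theorem orderOf_dvd_two_mul_of_pow_eq_neg_one {R : Type*} [Monoid R] [HasDistribNeg R] {a : R}
    {x : ℕ} (h : a ^ x = -1) : orderOf a ∣ 2 * x :=
  orderOf_dvd_of_pow_eq_one (by rw [mul_comm, pow_mul, h, neg_one_sq])

theorem not_orderOf_dvd_of_pow_eq_neg_one {R : Type*} [Monoid R] [HasDistribNeg R] {a : R}
    {x : ℕ} (h : a ^ x = -1) (hR : (-1 : R) ≠ 1) : ¬ orderOf a ∣ x := by
  rw [orderOf_dvd_iff_pow_eq_one, h]
  exact hR

theorem padicValNat_two_orderOf_of_pow_eq_neg_one {R : Type*} [Monoid R] [HasDistribNeg R]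
    {a : R} {x : ℕ} (hx : x ≠ 0) (h : a ^ x = -1) (hR : (-1 : R) ≠ 1) :
    padicValNat 2 (orderOf a) = padicValNat 2 x + 1 :=
  padicValNat_eq_succ_of_dvd_mul_of_not_dvd Nat.prime_two hx
    (orderOf_dvd_two_mul_of_pow_eq_neg_one h) (not_orderOf_dvd_of_pow_eq_neg_one h hR)

theorem ZMod.neg_one_ne_one_of_odd {p : ℕ} (hp : p.Prime) (hodd : Odd p) :
    (-1 : ZMod p) ≠ 1 :=
  have : Fact (2 < p) := ⟨hp.two_le.lt_of_ne (by rintro rfl; exact absurd hodd (by decide))⟩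
  ZMod.neg_one_ne_one

theorem stmt_5_general (q m x i : ℕ) (hm : Odd m)
    (hx : 0 < x) (hqx : (q : ZMod m) ^ x = -1) (hi : 1 ≤ i)
    (hvx : padicValNat 2 x = i - 1) :
    ∀ p : ℕ, p.Prime → p ∣ m → padicValNat 2 (orderOf (q : ZMod p)) = i := by
  intro p hp hpm
  have hqp : (q : ZMod p) ^ x = -1 := by
    simpa only [map_pow, map_neg, map_one, map_natCast] using
      congrArg (ZMod.castHom hpm (ZMod p)) hqx
  have hR := ZMod.neg_one_ne_one_of_odd hp (hm.of_dvd_nat hpm)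
  rw [padicValNat_two_orderOf_of_pow_eq_neg_one hx.ne' hqp hR]
  omega

/-- Let `q` be a power of `2` and `m ≥ 3` odd.  If there is a positive integer `x` with
`q ^ x ≡ -1 (mod m)` and `ν₂(x) = i - 1` (with `i ≥ 1`), then every prime divisor `p` of `m`
satisfies `ν₂(ord_p(q)) = i`. -/
theorem stmt_5 (q e m x i : ℕ) (hq : q = 2 ^ e) (hm : Odd m) (hm3 : 3 ≤ m)
    (hx : 0 < x) (hqx : (q : ZMod m) ^ x = -1) (hi : 1 ≤ i)
    (hvx : padicValNat 2 x = i - 1) :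
    ∀ p : ℕ, p.Prime → p ∣ m → padicValNat 2 (orderOf (q : ZMod p)) = i :=
  stmt_5_general q m x i hm hx hqx hi hvx
end

section
/- Let F be a finite field of characteristic 2 with q elements and G a dihedral group of order 2n with n odd, n ≥ 3. If V is a faithful simple FG-module, then ν₂(dim_F V) ≤ ω(n) + 1, where ω(n) = ν₂(ord_n(q)). -/
/-!
Let `a = ρ(r)` and `t = ρ(s)`, and let `k = ord_n(q)`, so that `a ^ (q ^ k) = a`. A minimal nonzero
`a`-invariant subspace `W` has an irreducible minimal polynomial `μ` for `a`, of degree `dim W`,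
and `μ ∣ X ^ (q ^ k) - X`; hence `dim W ∣ k`. Since `t` normalizes `⟨a⟩`, the subspace `W + tW`
is `G`-invariant, hence equals `V`, while `W ∩ tW` is `0` or `W`. So `dim V ∣ 2 dim W ∣ 2k`.
-/

noncomputable section

/-- The number of factors in the composition series `s` that are isomorphic to `U`. -/
def cfCount (R : Type) [Ring R] {M : Type} [AddCommGroup M] [Module R M]
    (s : CompositionSeries (Submodule R M)) (U : Type) [AddCommGroup U] [Module R U] : ℕ :=
  Nat.card {i : Fin s.length //
    Nonempty ((↥(s i.succ) ⧸ Submodule.comap (s i.succ).subtype (s i.castSucc)) ≃ₗ[R] U)}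

/-- A representation is self-dual if it is isomorphic to its (contragredient) dual. -/
def SelfDualRep {F : Type} [Field F] {G : Type} [Group G] {V : Type} [AddCommGroup V]
    [Module F V] (ρ : Representation F G V) : Prop :=
  Nonempty (ρ.asModule ≃ₗ[MonoidAlgebra F G] ρ.dual.asModule)

/-- A representation is an even-multiplicity module if every self-dual simple module occurs
with even multiplicity in any composition series. -/
def IsEvenMultiplicity {F : Type} [Field F] {G : Type} [Group G] {V : Type} [AddCommGroup V]
    [Module F V] (ρ : Representation F G V) : Prop :=
  ∀ (U : Type) (_ : AddCommGroup U) (_ : Module F U) (μ : Representation F G U),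
    IsSimpleModule (MonoidAlgebra F G) μ.asModule → SelfDualRep μ →
    ∀ s : CompositionSeries (Submodule (MonoidAlgebra F G) ρ.asModule),
      s.head = ⊥ → s.last = ⊤ → Even (cfCount (MonoidAlgebra F G) s μ.asModule)

open Module Polynomial DihedralGroup

namespace Module.End

section Irreducible

variable {K M : Type*} [Field K] [AddCommGroup M] [Module K M] (a : Module.End K M)

theorem ker_aeval_mem_invtSubmodule (f : K[X]) : LinearMap.ker (aeval a f) ∈ a.invtSubmodule := by
  intro x hx
  have hcomm : Commute (aeval a f) a := by simpa using (Commute.all f X).map (aeval a)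
  simp only [Submodule.mem_comap, LinearMap.mem_ker] at hx ⊢
  rw [← mul_apply, hcomm.eq, mul_apply, hx, map_zero]

theorem nontrivial_of_isSimpleOrder_invtSubmodule [IsSimpleOrder a.invtSubmodule] :
    Nontrivial M := by
  by_contra h
  rw [not_nontrivial_iff_subsingleton] at h
  exact bot_ne_top (α := a.invtSubmodule) (Subtype.ext (Subsingleton.elim _ _))

variable [IsSimpleOrder a.invtSubmodule]

theorem eq_bot_or_eq_top_of_mem_invtSubmodule {p : Submodule K M} (hp : p ∈ a.invtSubmodule) :
    p = ⊥ ∨ p = ⊤ := by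
  rw [← invtSubmodule.mk_eq_bot_iff a hp, ← invtSubmodule.mk_eq_top_iff a hp]
  exact eq_bot_or_eq_top _

theorem aeval_eq_zero_or_injective (f : K[X]) :
    aeval a f = 0 ∨ Function.Injective (aeval a f) := by
  rw [← LinearMap.ker_eq_top, ← LinearMap.ker_eq_bot, or_comm]
  exact eq_bot_or_eq_top_of_mem_invtSubmodule a (ker_aeval_mem_invtSubmodule a f)

/-- `M` is cyclic, generated by any `w ≠ 0`, with `f ↦ f(a) w` having kernel `(minpoly K a)`. -/
theorem finrank_eq_natDegree_minpoly : finrank K M = (minpoly K a).natDegree := by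
  have := nontrivial_of_isSimpleOrder_invtSubmodule a
  obtain ⟨w, hw⟩ := exists_ne (0 : M)
  let φ : K[X] →ₗ[K] M := LinearMap.applyₗ w ∘ₗ (aeval a).toLinearMap
  have hφ (f : K[X]) : φ f = aeval a f w := rfl
  have hker : LinearMap.ker φ = (Ideal.span {minpoly K a}).restrictScalars K := by
    ext f
    rw [LinearMap.mem_ker, Submodule.restrictScalars_mem, Ideal.mem_span_singleton,
      minpoly.dvd_iff, hφ]
    refine ⟨fun h => ?_, fun h => by rw [h, LinearMap.zero_apply]⟩
    exact (aeval_eq_zero_or_injective a f).resolve_right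
      fun hinj => hw (hinj (by rw [h, map_zero]))
  have hsurj : Function.Surjective φ := by
    rw [← LinearMap.range_eq_top]
    refine (eq_bot_or_eq_top_of_mem_invtSubmodule a ?_).resolve_left ?_
    · rintro - ⟨f, rfl⟩
      exact ⟨X * f, by simp [hφ]⟩
    · exact fun h => hw (by simpa [hφ] using (LinearMap.range_eq_bot.mp h ▸ rfl : φ 1 = 0))
  rw [← (φ.quotKerEquivOfSurjective hsurj).finrank_eq, hker,
    (Submodule.Quotient.restrictScalarsEquiv K _).finrank_eq, finrank_quotient_span_eq_natDegree]

variable [FiniteDimensional K M]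

theorem irreducible_minpoly : Irreducible (minpoly K a) := by
  have := nontrivial_of_isSimpleOrder_invtSubmodule a
  have hint : IsIntegral K a := .of_finite K a
  refine ⟨minpoly.not_isUnit K a, fun f g hfg => ?_⟩
  rcases aeval_eq_zero_or_injective a f with hf | hf
  · obtain ⟨c, rfl⟩ := minpoly.dvd K a hf
    refine .inr (IsUnit.of_mul_eq_one_right c (mul_left_cancel₀ (minpoly.ne_zero hint) ?_))
    rw [mul_one, ← mul_assoc, ← hfg]
  · have hg : aeval a g = 0 := by
      ext x
      have hfg0 : aeval a f * aeval a g = 0 := by rw [← map_mul, ← hfg, minpoly.aeval]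
      exact hf (by simpa using congr($hfg0 x))
    obtain ⟨c, rfl⟩ := minpoly.dvd K a hg
    refine .inl (IsUnit.of_mul_eq_one c (mul_left_cancel₀ (minpoly.ne_zero hint) ?_))
    rw [mul_one, mul_left_comm, ← hfg]

theorem finrank_dvd_of_pow_card_pow_eq_self [Finite K] {k : ℕ} (h : a ^ Nat.card K ^ k = a) :
    finrank K M ∣ k := by
  rw [finrank_eq_natDegree_minpoly a]
  refine (irreducible_minpoly a).natDegree_dvd_of_dvd_X_pow_card_pow_sub_X (minpoly.dvd K a ?_)
  simp [h]

end Irreducible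

variable {K V : Type*} [Field K] [AddCommGroup V] [Module K V]

theorem exists_isAtom_invtSubmodule [FiniteDimensional K V] [Nontrivial V] (A : Module.End K V) :
    ∃ W : A.invtSubmodule, IsAtom W :=
  (eq_bot_or_exists_atom_le ⊤).resolve_left (fun h => top_ne_bot (congrArg Subtype.val h))
    |>.imp fun _ => And.left

variable {A : Module.End K V}

theorem coe_ne_bot_of_isAtom {W : A.invtSubmodule} (hW : IsAtom W) : (W : Submodule K V) ≠ ⊥ :=
  fun h => hW.1 ((invtSubmodule.mk_eq_bot_iff A W.2).mpr h)

theorem disjoint_or_le_of_isAtom {W : A.invtSubmodule} (hW : IsAtom W) {U : Submodule K V}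
    (hU : U ∈ A.invtSubmodule) : Disjoint (W : Submodule K V) U ∨ (W : Submodule K V) ≤ U := by
  refine or_iff_not_imp_right.mpr fun hle => ?_
  have hle' : ¬ W ≤ ⟨U, hU⟩ := hle
  exact (invtSubmodule.disjoint_mk_iff _ W.2 hU).mp (hW.not_le_iff_disjoint.mp hle')

theorem isSimpleOrder_invtSubmodule_restrict {W : A.invtSubmodule} (hW : IsAtom W) :
    IsSimpleOrder (invtSubmodule (A.restrict W.2)) := by
  have : Nontrivial (W : Submodule K V) :=
    Submodule.nontrivial_iff_ne_bot.mpr (coe_ne_bot_of_isAtom hW)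
  have : Nontrivial (invtSubmodule (A.restrict W.2)) :=
    ⟨⊥, ⊤, fun h => bot_ne_top (congrArg Subtype.val h)⟩
  refine ⟨fun ⟨p, hp⟩ => ?_⟩
  rw [invtSubmodule.mk_eq_bot_iff _ hp, invtSubmodule.mk_eq_top_iff _ hp]
  have hq := invtSubmodule.map_subtype_mem_of_mem_invtSubmodule (f := A) (p := W) W.2 (q := p) hp
  have hle : (⟨_, hq⟩ : A.invtSubmodule) ≤ W := Submodule.map_subtype_le _ _
  have hinj := Submodule.map_injective_of_injective (W : Submodule K V).injective_subtype
  rcases hW.le_iff.mp hle with h | h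
  · exact .inl (hinj ((congrArg Subtype.val h).trans (Submodule.map_bot _).symm))
  · exact .inr (hinj ((congrArg Subtype.val h).trans (Submodule.map_subtype_top _).symm))

theorem finrank_dvd_of_isAtom [FiniteDimensional K V] [Finite K] {W : A.invtSubmodule}
    (hW : IsAtom W) {k : ℕ} (h : A ^ Nat.card K ^ k = A) : finrank K W ∣ k := by
  have := isSimpleOrder_invtSubmodule_restrict hW
  refine finrank_dvd_of_pow_card_pow_eq_self (A.restrict W.2) ?_
  rw [pow_restrict (f' := A) (p := W) _ W.2]
  ext x
  simp only [LinearMap.coe_restrict_apply, h]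
  rfl

end Module.End

theorem Submodule.finrank_sup_dvd_two_mul {K V : Type*} [DivisionRing K] [AddCommGroup V]
    [Module K V] [FiniteDimensional K V] {W U : Submodule K V}
    (hU : finrank K U = finrank K W) (h : Disjoint W U ∨ W ≤ U) :
    finrank K ↥(W ⊔ U) ∣ 2 * finrank K W := by
  rcases h with h | h
  · have hsum := Submodule.finrank_sup_add_finrank_inf_eq W U
    rw [h.eq_bot, finrank_bot] at hsum
    exact ⟨1, by omega⟩
  · rw [sup_eq_right.mpr h, hU]
    exact dvd_mul_left _ _

namespace Representation

section CommRing

variable {K G V : Type*} [CommRing K] [Monoid G] [AddCommGroup V] [Module K V]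

theorem eq_top_of_mem_invtSubmodule {ρ : Representation K G V}
    [IsSimpleModule (MonoidAlgebra K G) ρ.asModule] {p : Submodule K V}
    (hp : p ∈ ρ.invtSubmodule) (hp0 : p ≠ ⊥) : p = ⊤ := by
  have := ρ.mapSubmodule.isSimpleOrder
  have h := (eq_bot_or_eq_top (⟨p, hp⟩ : ρ.invtSubmodule)).resolve_left
    fun h => hp0 (congrArg Subtype.val h)
  exact congrArg Subtype.val h

variable {n : ℕ} [NeZero n] (ρ : Representation K (DihedralGroup n) V)

theorem dihedral_apply_r_eq_pow (j : ZMod n) : ρ (r j) = ρ (r 1) ^ j.val := by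
  rw [← map_pow, r_one_pow, ZMod.natCast_zmod_val]

theorem mem_invtSubmodule_of_r_one_of_sr_zero {p : Submodule K V}
    (hr : p ∈ End.invtSubmodule (ρ (r 1))) (hs : p ∈ End.invtSubmodule (ρ (sr 0))) :
    p ∈ ρ.invtSubmodule := by
  have hpow (j : ZMod n) : p ∈ End.invtSubmodule (ρ (r j)) := by
    rw [dihedral_apply_r_eq_pow, End.mem_invtSubmodule_iff_forall_mem_of_mem]
    exact End.pow_apply_mem_of_forall_mem _ hr
  rw [mem_invtSubmodule]
  rintro (j | j)
  · exact hpow j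
  · rw [← zero_add j, ← sr_mul_r, map_mul]
    exact End.invtSubmodule.comp _ hs (hpow j)

theorem map_sr_zero_mem_invtSubmodule_r_one {W : Submodule K V}
    (hW : W ∈ End.invtSubmodule (ρ (r 1))) :
    W.map (ρ (sr 0)) ∈ End.invtSubmodule (ρ (r 1)) := by
  have hW' : W ∈ End.invtSubmodule (ρ (r (-1))) := by
    rw [dihedral_apply_r_eq_pow, End.mem_invtSubmodule_iff_forall_mem_of_mem]
    exact End.pow_apply_mem_of_forall_mem _ hW
  have hconj : ρ (r 1) ∘ₗ ρ (sr 0) = ρ (sr 0) ∘ₗ ρ (r (-1)) := by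
    rw [← End.mul_eq_comp, ← End.mul_eq_comp, ← map_mul, ← map_mul, r_mul_sr, sr_mul_r,
      zero_sub, zero_add]
  rw [End.mem_invtSubmodule_iff_map_le, ← Submodule.map_comp, hconj, Submodule.map_comp]
  exact Submodule.map_mono ((End.mem_invtSubmodule_iff_map_le _).mp hW')

theorem sup_map_sr_zero_mem_invtSubmodule {W : Submodule K V}
    (hW : W ∈ End.invtSubmodule (ρ (r 1))) : W ⊔ W.map (ρ (sr 0)) ∈ ρ.invtSubmodule := by
  refine mem_invtSubmodule_of_r_one_of_sr_zero ρ
    (End.invtSubmodule.sup_mem hW (map_sr_zero_mem_invtSubmodule_r_one ρ hW)) ?_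
  have hinv : ρ (sr 0) ∘ₗ ρ (sr 0) = LinearMap.id := by
    rw [← End.mul_eq_comp, ← map_mul, sr_mul_sr, sub_zero, ← one_def, map_one]
    rfl
  rw [End.mem_invtSubmodule_iff_map_le, Submodule.map_sup, ← Submodule.map_comp, hinv,
    Submodule.map_id, sup_comm]

end CommRing

theorem finrank_dvd_two_mul_of_isAtom {K V : Type*} [Field K] [AddCommGroup V] [Module K V]
    [FiniteDimensional K V] {n : ℕ} [NeZero n] {ρ : Representation K (DihedralGroup n) V}
    [IsSimpleModule (MonoidAlgebra K (DihedralGroup n)) ρ.asModule]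
    {W : End.invtSubmodule (ρ (r 1))} (hW : IsAtom W) : finrank K V ∣ 2 * finrank K W := by
  set TW := (W : Submodule K V).map (ρ (sr 0))
  have hsup : (W : Submodule K V) ⊔ TW = ⊤ :=
    eq_top_of_mem_invtSubmodule (ρ.sup_map_sr_zero_mem_invtSubmodule W.2)
      (ne_bot_of_le_ne_bot (End.coe_ne_bot_of_isAtom hW) le_sup_left)
  rw [← finrank_top, ← hsup]
  exact Submodule.finrank_sup_dvd_two_mul
    (Submodule.equivMapOfInjective _ (ρ.apply_bijective _).1 _).finrank_eq.symm
    (End.disjoint_or_le_of_isAtom hW (ρ.map_sr_zero_mem_invtSubmodule_r_one W.2))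

end Representation

theorem padicValNat_le_succ_of_dvd_mul {p m k : ℕ} [hp : Fact p.Prime] (hk : k ≠ 0)
    (h : m ∣ p * k) : padicValNat p m ≤ padicValNat p k + 1 := by
  have hpk : p * k ≠ 0 := mul_ne_zero hp.out.ne_zero hk
  calc padicValNat p m ≤ padicValNat p (p * k) :=
        (padicValNat_dvd_iff_le hpk).mp (pow_padicValNat_dvd.trans h)
    _ = padicValNat p k + 1 := by
        rw [padicValNat.mul hp.out.ne_zero hk, padicValNat_self, add_comm]

theorem stmt_10_general (F : Type) [Field F] [Fintype F] [CharP F 2] (q : ℕ) (hq : Fintype.card F = q)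
    (n : ℕ) (hodd : Odd n)
    (V : Type) [AddCommGroup V] [Module F V]
    (ρ : Representation F (DihedralGroup n) V)
    (hsimple : IsSimpleModule (MonoidAlgebra F (DihedralGroup n)) ρ.asModule) :
    padicValNat 2 (Module.finrank F V) ≤ padicValNat 2 (orderOf (q : ZMod n)) + 1 := by
  by_cases hfd : FiniteDimensional F V
  swap
  · simp [finrank_of_infinite_dimensional hfd]
  have : NeZero n := ⟨hodd.pos.ne'⟩
  have hk : orderOf (q : ZMod n) ≠ 0 := by
    obtain ⟨m, -, hqm⟩ := FiniteField.card F 2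
    have hcop : q.Coprime n := hq ▸ hqm ▸ (Nat.coprime_two_left.mpr hodd).pow_left m
    exact ((ZMod.isUnit_iff_coprime q n).mpr hcop).isOfFinOrder.orderOf_pos.ne'
  have hA : ρ (r 1) ^ Nat.card F ^ orderOf (q : ZMod n) = ρ (r 1) := by
    rw [← map_pow, r_one_pow, Nat.card_eq_fintype_card, hq, Nat.cast_pow, pow_orderOf_eq_one]
  have : Nontrivial V := IsSimpleModule.nontrivial (MonoidAlgebra F (DihedralGroup n)) ρ.asModule
  obtain ⟨W, hW⟩ := End.exists_isAtom_invtSubmodule (ρ (r 1))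
  exact padicValNat_le_succ_of_dvd_mul hk ((ρ.finrank_dvd_two_mul_of_isAtom hW).trans
    (mul_dvd_mul_left 2 (End.finrank_dvd_of_isAtom hW hA)))

/-- Let `F` be a finite field of characteristic `2` with `q` elements and `G` the dihedral group
of order `2n`, `n ≥ 3` odd.  For every faithful simple `FG`-module `V`,
`ν₂(dim_F V) ≤ ν₂(ord_n(q)) + 1`. -/
theorem stmt_10 (F : Type) [Field F] [Fintype F] [CharP F 2] (q : ℕ) (hq : Fintype.card F = q)
    (n : ℕ) (hodd : Odd n) (hn3 : 3 ≤ n)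
    (V : Type) [AddCommGroup V] [Module F V]
    (ρ : Representation F (DihedralGroup n) V)
    (hfaith : Function.Injective ρ)
    (hsimple : IsSimpleModule (MonoidAlgebra F (DihedralGroup n)) ρ.asModule) :
    padicValNat 2 (Module.finrank F V) ≤ padicValNat 2 (orderOf (q : ZMod n)) + 1 :=
  stmt_10_general F q hq n hodd V ρ hsimple
end
end
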